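/- Let x ∈ ℚ^n and let g ∈ GL_n(E) be arbitrary, where E = k((u)) with u^e = z. If the matrix Y := g^{-1}·x̃·g + g^{-1}·τ(g) is diagonal, then all entries of Y lie in k[[u]]. -/

import Mathlib

/-!
Write `Y = diag(y₁, …, yₙ)`. Multiplying by `g` gives `g * Y = x̃ * g + τ(g)`, i.e. entrywise
`g l j * y_j = x_l * g l j + τ(g l j)`. Since `τ` acts on each coefficient by a scalar, the right-hand
side has no coefficients below the order of `g l j`. Choosing `l` with `g l j ≠ 0` (a column of an
invertible matrix is nonzero), the coefficient of the product in degree `ord (g l j) + ord y_j` is the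
nonzero product of the leading coefficients, which forces `ord y_j ≥ 0`.
-/

noncomputable section

open Polynomial Matrix

variable {k : Type*} [Field k]

/-- The derivation `τ = (1/e)·u·d/du` on `E = k((u))` (where `u^e = z`),
acting coefficientwise by `n/e`. -/
def tauU (e : ℕ) (f : LaurentSeries k) : LaurentSeries k :=
  ⟨fun n => ((n : k) / (e : k)) * f.coeff n,
    f.isPWO_support'.mono (fun n hn => by
      simp only [Function.mem_support, ne_eq] at hn ⊢
      exact fun h => hn (by rw [h, mul_zero]))⟩

/-- For `x ∈ ℚ^n`, the constant diagonal matrix `x̃ = diag(x₁, …, xₙ)`. -/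
def diagQ {n : ℕ} (x : Fin n → ℚ) : Matrix (Fin n) (Fin n) (LaurentSeries k) :=
  Matrix.diagonal fun i => HahnSeries.C ((x i : k))

namespace HahnSeries

theorem order_nonneg_of_coeff_mul_eq_zero_of_lt_order {Γ R : Type*} [AddCommMonoid Γ]
    [LinearOrder Γ] [IsOrderedCancelAddMonoid Γ] [Semiring R] [NoZeroDivisors R]
    {f y : HahnSeries Γ R} (hf : f ≠ 0) (h : ∀ m < f.order, (f * y).coeff m = 0) :
    0 ≤ y.order := by
  by_contra! hneg
  have hy : y ≠ 0 := by
    rintro rfl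
    exact hneg.ne order_zero
  have hlt : f.order + y.order < f.order := add_lt_of_neg_right _ hneg
  have hlead := coeff_mul_order_add_order f y
  rw [h _ hlt] at hlead
  exact mul_ne_zero (leadingCoeff_ne_zero.mpr hf) (leadingCoeff_ne_zero.mpr hy) hlead.symm

end HahnSeries

theorem coeff_tauU (e : ℕ) (f : LaurentSeries k) (m : ℤ) :
    (tauU e f).coeff m = (m / e : k) * f.coeff m :=
  rfl

theorem coeff_C_mul_add_tauU_eq_zero_of_lt_order (e : ℕ) (c : k) {f : LaurentSeries k} {m : ℤ}
    (hm : m < f.order) : (HahnSeries.C c * f + tauU e f).coeff m = 0 := by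
  have hf : f.coeff m = 0 := HahnSeries.coeff_eq_zero_of_lt_order hm
  rw [HahnSeries.coeff_add, HahnSeries.C_mul_eq_smul, HahnSeries.coeff_smul, coeff_tauU, hf,
    smul_zero, mul_zero, add_zero]

theorem order_nonneg_of_mul_eq_C_mul_add_tauU (e : ℕ) (c : k) {f y : LaurentSeries k}
    (hf : f ≠ 0) (h : f * y = HahnSeries.C c * f + tauU e f) : 0 ≤ y.order :=
  HahnSeries.order_nonneg_of_coeff_mul_eq_zero_of_lt_order hf fun _ hm =>
    h ▸ coeff_C_mul_add_tauU_eq_zero_of_lt_order e c hm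

theorem Matrix.exists_apply_ne_zero_of_isUnit_det {n R : Type*} [Fintype n] [DecidableEq n]
    [CommRing R] [Nontrivial R] {g : Matrix n n R} (hg : IsUnit g.det) (j : n) : ∃ i, g i j ≠ 0 := by
  by_contra! h
  rw [Matrix.det_eq_zero_of_column_eq_zero j h] at hg
  exact not_isUnit_zero hg

theorem stmt1_general {n : ℕ} (e : ℕ)
    (x : Fin n → ℚ)
    (g : Matrix (Fin n) (Fin n) (LaurentSeries k)) (hg : IsUnit g.det)
    (Y : Matrix (Fin n) (Fin n) (LaurentSeries k))
    (hY : Y = g⁻¹ * diagQ x * g + g⁻¹ * (g.map (tauU e)))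
    (hdiag : ∀ i j, i ≠ j → Y i j = 0) :
    ∀ i j, ∀ m : ℤ, m < 0 → (Y i j).coeff m = 0 := by
  intro i j m hm
  rcases ne_or_eq i j with hij | rfl
  · rw [hdiag i j hij, HahnSeries.coeff_zero]
  have hgY : g * Matrix.diagonal Y.diag = diagQ x * g + g.map (tauU e) := by
    rw [(show Y.IsDiag from hdiag).diagonal_diag, hY, mul_add, ← Matrix.mul_assoc,
      ← Matrix.mul_assoc, ← Matrix.mul_assoc, Matrix.mul_nonsing_inv g hg, Matrix.one_mul,
      Matrix.one_mul]
  obtain ⟨l, hl⟩ := Matrix.exists_apply_ne_zero_of_isUnit_det hg i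
  have hentry : g l i * Y i i = HahnSeries.C (x l : k) * g l i + tauU e (g l i) := by
    simpa [diagQ, Matrix.diagonal_mul] using congrFun (congrFun hgY l) i
  exact HahnSeries.coeff_eq_zero_of_lt_order
    (hm.trans_le (order_nonneg_of_mul_eq_C_mul_add_tauU e _ hl hentry))

/-- if `g ∈ GL_n(E)` (with `E = k((u))`, `u^e = z`) is such that
`Y := g⁻¹·x̃·g + g⁻¹·τ(g)` is diagonal, then all entries of `Y` lie in `k[[u]]`. -/
theorem stmt1 [IsAlgClosed k] [CharZero k] {n : ℕ} (e : ℕ) (he : 0 < e)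
    (x : Fin n → ℚ)
    (g : Matrix (Fin n) (Fin n) (LaurentSeries k)) (hg : IsUnit g.det)
    (Y : Matrix (Fin n) (Fin n) (LaurentSeries k))
    (hY : Y = g⁻¹ * diagQ x * g + g⁻¹ * (g.map (tauU e)))
    (hdiag : ∀ i j, i ≠ j → Y i j = 0) :
    ∀ i j, ∀ m : ℤ, m < 0 → (Y i j).coeff m = 0 :=
  stmt1_general e x g hg Y hY hdiag
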